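/- arXiv:2004.05073 — 3 statements merged into one kernel-verified Lean document; each statement's English description precedes it below -/
import Mathlib

section
/- Let P be a longest Berge path in an r-graph H, with edges e_1,...,e_t and key vertices v_0,v_1,...,v_t (so t = ℓ(H)). Then for each a ∈ {0,t} and each edge e ∈ E^O_a(P), one has e \ {v_a} ⊆ K_a(P). -/
namespace Berge

variable {V : Type*} [DecidableEq V] [Fintype V]

/-- `E` is the edge set of an `r`-uniform hypergraph (`r`-graph) on `V`. -/
def IsRGraph (r : ℕ) (E : Finset (Finset V)) : Prop :=
  ∀ e ∈ E, e.card = r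

/-- The degree of a vertex: the number of edges containing it. -/
def deg (E : Finset (Finset V)) (x : V) : ℕ :=
  (E.filter fun e => x ∈ e).card

/-- The minimum degree `δ₁`. -/
noncomputable def minDeg (E : Finset (Finset V)) : ℕ :=
  sInf {d | ∃ x : V, deg E x = d}

/-- A Berge path of length `t`: distinct vertices `v 0, ..., v t` and distinct edges
`f 0, ..., f (t-1)` (here `f i` plays the role of the edge `e_{i+1}` of the paper),
with `{v i, v (i+1)} ⊆ f i`. -/
def IsBergePath (E : Finset (Finset V)) (t : ℕ)
    (v : Fin (t + 1) → V) (f : Fin t → Finset V) : Prop :=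
  Function.Injective v ∧ Function.Injective f ∧ (∀ i, f i ∈ E) ∧
    ∀ i : Fin t, v i.castSucc ∈ f i ∧ v i.succ ∈ f i

/-- `H` is connected: any two vertices are connected by a Berge path. -/
def Connected (E : Finset (Finset V)) : Prop :=
  ∀ u w : V, ∃ (t : ℕ) (v : Fin (t + 1) → V) (f : Fin t → Finset V),
    IsBergePath E t v f ∧ v 0 = u ∧ v (Fin.last t) = w

/-- `ℓ(H)`: the length of a longest Berge path. -/
noncomputable def pathLen (E : Finset (Finset V)) : ℕ :=
  sSup {t | ∃ (v : Fin (t + 1) → V) (f : Fin t → Finset V), IsBergePath E t v f}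

/-- A Berge cycle of length `t`: distinct vertices `v 0, ..., v (t-1)` and distinct
edges `f 0, ..., f (t-1)` with `{v (i-1), v i} ⊆ f i` (indices mod `t`), equivalently
`v i ∈ f i` and `v i ∈ f (i+1)` for all `i`. -/
def IsBergeCycle (E : Finset (Finset V)) (t : ℕ)
    (v : Fin t → V) (f : Fin t → Finset V) : Prop :=
  Function.Injective v ∧ Function.Injective f ∧ (∀ i, f i ∈ E) ∧
    ∀ i : Fin t, v i ∈ f i ∧ v i ∈ f ⟨((i : ℕ) + 1) % t, Nat.mod_lt _ i.pos⟩

/-- `c(H)`: the length of a longest Berge cycle. -/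
noncomputable def cycLen (E : Finset (Finset V)) : ℕ :=
  sSup {t | ∃ (v : Fin t → V) (f : Fin t → Finset V), IsBergeCycle E t v f}

/-- `E^O(P, w)`: the edges of `H` outside `P` that contain `w`. -/
def EO (E : Finset (Finset V)) {t : ℕ} (f : Fin t → Finset V) (w : V) :
    Set (Finset V) :=
  {e | e ∈ E ∧ e ∉ Set.range f ∧ w ∈ e}

/-- `K(P, w)`: the key vertices of `P` other than `w` that lie on some edge of
`E^O(P, w)`.  For `w = v a` with `a ∈ {0, t}` this is `K_a(P)`; for `w ∉ K(P)` this
is `K_w(P)`. -/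
def KsetP (E : Finset (Finset V)) {t : ℕ} (v : Fin (t + 1) → V)
    (f : Fin t → Finset V) (w : V) : Set V :=
  {x | (∃ i, v i = x) ∧ x ≠ w ∧ ∃ e ∈ EO E f w, x ∈ e}

/-- `κ(P, w)`: the set of indices of the vertices in `K(P, w)` (as integers). -/
def kappa (E : Finset (Finset V)) {t : ℕ} (v : Fin (t + 1) → V)
    (f : Fin t → Finset V) (w : V) : Set ℤ :=
  {i : ℤ | ∃ j : Fin (t + 1), ((j : ℕ) : ℤ) = i ∧ v j ∈ KsetP E v f w}

/-- `E^I(P, w)`: the edges of `P` that contain `w`. -/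
def EIset {t : ℕ} (f : Fin t → Finset V) (w : V) : Set (Finset V) :=
  {e | e ∈ Set.range f ∧ w ∈ e}

/-- `ε^i(P, w)`: the (1-based, as in the paper) indices of the edges of `P`
containing `w`, as integers; so `i ∈ ε^i(P, w)` iff `w ∈ e_i = f (i-1)`. -/
def epsi {t : ℕ} (f : Fin t → Finset V) (w : V) : Set ℤ :=
  {i : ℤ | ∃ j : Fin t, ((j : ℕ) : ℤ) + 1 = i ∧ w ∈ f j}

/-- `N_H(x) = {T : T ∪ {x} ∈ E(H)}` (with `x ∉ T`). -/
def NH (E : Finset (Finset V)) (x : V) : Set (Finset V) :=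
  {T | x ∉ T ∧ insert x T ∈ E}

/-- The edge set of `S_r(n, k)` on the vertex set `V` (`|V| = n`), where `A ⊆ V` is
the distinguished `k`-set: all `r`-sets `e` with `|e ∩ (V \ A)| ≤ 1`. -/
def Sr (r : ℕ) (A : Finset V) : Finset (Finset V) :=
  Finset.univ.filter fun e : Finset V => e.card = r ∧ (e \ A).card ≤ 1

/-- The edge set of `S'_r(n, k)`: all `r`-sets `e` with `|e ∩ (V \ A)| = 1`. -/
def Sr' (r : ℕ) (A : Finset V) : Finset (Finset V) :=
  Finset.univ.filter fun e : Finset V => e.card = r ∧ (e \ A).card = 1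

/-- The edge set of `S(sK^r_{k+1}, 1)` determined by the cliques `B 0, ..., B (s-1)`:
all `r`-subsets of some `B i`. -/
def SK (r : ℕ) {s : ℕ} (B : Fin s → Finset V) : Finset (Finset V) :=
  Finset.univ.filter fun e : Finset V => e.card = r ∧ ∃ i, e ⊆ B i

/-- `H` is isomorphic to `S(sK^r_{k+1}, 1)`: there are `s` cliques of size `k+1`
pairwise meeting exactly in a common center `c` and covering `V`, and the edges of
`H` are exactly the `r`-subsets of the cliques. -/
def IsStarOfCliques (r k s : ℕ) (E : Finset (Finset V)) : Prop :=
  ∃ (c : V) (B : Fin s → Finset V),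
    (∀ i, (B i).card = k + 1) ∧ (∀ i, c ∈ B i) ∧
    (∀ i j, i ≠ j → B i ∩ B j = {c}) ∧
    Finset.univ.biUnion B = Finset.univ ∧
    E = SK r B

/- If a vertex `x ≠ v 0` of an edge `e ∈ E^O_0(P)` were not a key vertex, then `x, e, P` would
be a Berge path of length `t + 1`, contradicting `t = ℓ(H)`. The end `v t` is the end `v 0` of
the reversed path, which has the same key vertices and edges. -/

section Extension

variable {V : Type*} {E : Finset (Finset V)} {t : ℕ} {v : Fin (t + 1) → V}
  {f : Fin t → Finset V}

theorem IsBergePath.rev (hP : IsBergePath E t v f) :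
    IsBergePath E t (v ∘ Fin.rev) (f ∘ Fin.rev) := by
  obtain ⟨hv, hf, hfE, hvf⟩ := hP
  refine ⟨hv.comp Fin.rev_injective, hf.comp Fin.rev_injective, fun i => hfE _, fun i => ?_⟩
  simp only [Function.comp_apply, Fin.rev_castSucc, Fin.rev_succ]
  exact (hvf i.rev).symm

theorem IsBergePath.cons (hP : IsBergePath E t v f) {x : V} {e : Finset V}
    (hx : x ∉ Set.range v) (heE : e ∈ E) (he : e ∉ Set.range f) (hxe : x ∈ e)
    (hv₀ : v 0 ∈ e) :
    IsBergePath E (t + 1) (Fin.cons x v) (Fin.cons e f) := by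
  obtain ⟨hv, hf, hfE, hvf⟩ := hP
  refine ⟨Fin.cons_injective_iff.mpr ⟨hx, hv⟩, Fin.cons_injective_iff.mpr ⟨he, hf⟩,
    Fin.cases heE hfE, Fin.cases ⟨hxe, hv₀⟩ fun i => ?_⟩
  rw [← Fin.succ_castSucc, Fin.cons_succ, Fin.cons_succ, Fin.cons_succ]
  exact hvf i

theorem IsBergePath.le_pathLen [Fintype V] (hP : IsBergePath E t v f) : t ≤ pathLen E := by
  refine le_csSup ⟨Fintype.card V, ?_⟩ ⟨v, f, hP⟩
  rintro s ⟨w, g, hQ⟩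
  exact (by simpa using Fintype.card_le_of_injective w hQ.1 : s < _).le

theorem IsBergePath.mem_range_of_mem_EO_zero [Fintype V] (hP : IsBergePath E t v f)
    (hlong : pathLen E = t) {e : Finset V} (he : e ∈ EO E f (v 0)) {x : V} (hxe : x ∈ e) :
    x ∈ Set.range v := by
  by_contra hx
  obtain ⟨heE, hef, hv₀⟩ := he
  have := (hP.cons hx heE hef hxe hv₀).le_pathLen
  omega

end Extension

theorem outside_edge_subset_Kset_general {V : Type*} [DecidableEq V] [Fintype V]
    (t : ℕ) (E : Finset (Finset V))
    (v : Fin (t + 1) → V) (f : Fin t → Finset V)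
    (hP : IsBergePath E t v f) (hlong : pathLen E = t)
    (a : Fin (t + 1)) (ha : a = 0 ∨ a = Fin.last t) :
    ∀ e ∈ EO E f (v a), (↑(e.erase (v a)) : Set V) ⊆ KsetP E v f (v a) := by
  intro e he x hx
  obtain ⟨hxa, hxe⟩ := Finset.mem_erase.mp hx
  refine ⟨show x ∈ Set.range v from ?_, hxa, e, he, hxe⟩
  rcases ha with rfl | rfl
  · exact hP.mem_range_of_mem_EO_zero hlong he hxe
  · have hv : Set.range (v ∘ Fin.rev) = Set.range v := Fin.rev_surjective.range_comp v
    have hf : Set.range (f ∘ Fin.rev) = Set.range f := Fin.rev_surjective.range_comp f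
    rw [← hv]
    refine hP.rev.mem_range_of_mem_EO_zero hlong ?_ hxe
    simpa [EO, hf] using he

/-- **Corollary (Statement 7).** Let `P` be a longest Berge path in an `r`-graph `H`,
with edges `f 0, ..., f (t-1)` and key vertices `v 0, ..., v t` (so `t = ℓ(H)`).
Then for `a ∈ {0, t}` and every `e ∈ E^O_a(P)`, we have `e \ {v a} ⊆ K_a(P)`. -/
theorem outside_edge_subset_Kset {V : Type*} [DecidableEq V] [Fintype V]
    (r t : ℕ) (E : Finset (Finset V)) (hE : IsRGraph r E)
    (v : Fin (t + 1) → V) (f : Fin t → Finset V)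
    (hP : IsBergePath E t v f) (hlong : pathLen E = t)
    (a : Fin (t + 1)) (ha : a = 0 ∨ a = Fin.last t) :
    ∀ e ∈ EO E f (v a), (↑(e.erase (v a)) : Set V) ⊆ KsetP E v f (v a) :=
  outside_edge_subset_Kset_general t E v f hP hlong a ha

end Berge
end

section
/- Suppose k ≥ r ≥ 2, t ≤ 2k, and H is a connected r-graph on n vertices with ℓ(H) = t and n > t+1. Let P be a longest Berge path in H with edges e_1,...,e_t and key vertices v_0,v_1,...,v_t. Then (ε^i_0(P) − 1) ∩ κ_t(P) = ∅ and ε^i_t(P) ∩ κ_0(P) = ∅. -/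
namespace Berge

variable {V : Type*}

theorem _root_.Fin.exists_not_castSucc_and_succ {n : ℕ} (p : Fin (n + 1) → Prop)
    (h0 : ¬p 0) (hn : p (Fin.last n)) : ∃ i : Fin n, ¬p i.castSucc ∧ p i.succ := by
  induction n with
  | zero => exact absurd hn h0
  | succ n ih =>
    by_cases hp : p (Fin.last n).castSucc
    · obtain ⟨i, hi⟩ := ih (p ∘ Fin.castSucc) h0 hp
      exact ⟨i.castSucc, hi⟩
    · exact ⟨Fin.last n, hp, hn⟩

theorem isBergeCycle_succ_iff {E : Finset (Finset V)} {m : ℕ} {u : Fin (m + 1) → V}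
    {g : Fin (m + 1) → Finset V} :
    IsBergeCycle E (m + 1) u g ↔ Function.Injective u ∧ Function.Injective g ∧
      (∀ i, g i ∈ E) ∧ ∀ i, u i ∈ g i ∧ u i ∈ g (i + 1) := by
  have hsucc (i : Fin (m + 1)) :
      (⟨(i + 1) % (m + 1), Nat.mod_lt _ i.pos⟩ : Fin (m + 1)) = i + 1 :=
    Fin.ext (by simp [Fin.val_add])
  simp only [IsBergeCycle, hsucc]

section RotateIndex

variable {t : ℕ}

def rotateVertexIndex (j : Fin t) (p : Fin (t + 1)) : Fin (t + 1) :=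
  ⟨if (p : ℕ) ≤ j then p else t + j + 1 - p, by split_ifs <;> omega⟩

def rotateEdgeIndex (j : Fin t) (p : Fin t) : Fin t :=
  ⟨if (p : ℕ) ≤ j then p else t + j - p, by split_ifs <;> omega⟩

theorem rotateVertexIndex_injective (j : Fin t) : Function.Injective (rotateVertexIndex j) := by
  intro a b hab
  simp only [rotateVertexIndex, Fin.ext_iff] at hab ⊢
  split_ifs at hab <;> omega

theorem rotateEdgeIndex_injective (j : Fin t) : Function.Injective (rotateEdgeIndex j) := by
  intro a b hab
  simp only [rotateEdgeIndex, Fin.ext_iff] at hab ⊢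
  split_ifs at hab <;> omega

theorem rotateEdgeIndex_self (j : Fin t) : rotateEdgeIndex j j = j := by
  simp [rotateEdgeIndex]

theorem rotateVertexIndex_zero (j : Fin t) : rotateVertexIndex j 0 = 0 := by
  simp [rotateVertexIndex]

theorem rotateVertexIndex_last (j : Fin t) : rotateVertexIndex j (Fin.last t) = j.succ := by
  ext
  simp only [rotateVertexIndex, Fin.val_last, Fin.val_succ]
  split_ifs <;> omega

theorem rotateVertexIndex_castSucc_self (j : Fin t) :
    rotateVertexIndex j j.castSucc = j.castSucc := by
  ext
  simp [rotateVertexIndex]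

theorem rotateVertexIndex_succ_self (j : Fin t) : rotateVertexIndex j j.succ = Fin.last t := by
  ext
  simp only [rotateVertexIndex, Fin.val_succ, Fin.val_last]
  split_ifs <;> omega

theorem rotateVertexIndex_castSucc_succ {j p : Fin t} (hp : p ≠ j) :
    rotateVertexIndex j p.castSucc = (rotateEdgeIndex j p).castSucc ∧
        rotateVertexIndex j p.succ = (rotateEdgeIndex j p).succ ∨
      rotateVertexIndex j p.castSucc = (rotateEdgeIndex j p).succ ∧
        rotateVertexIndex j p.succ = (rotateEdgeIndex j p).castSucc := by
  simp only [rotateVertexIndex, rotateEdgeIndex, Fin.ext_iff, Fin.val_castSucc, Fin.val_succ]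
    at hp ⊢
  split_ifs <;> omega

end RotateIndex

namespace IsBergePath

variable {E : Finset (Finset V)} {t : ℕ} {v : Fin (t + 1) → V} {f : Fin t → Finset V}

theorem le_pathLen_s11 [Fintype V] (hP : IsBergePath E t v f) : t ≤ pathLen E := by
  refine le_csSup ⟨Fintype.card V, ?_⟩ ⟨v, f, hP⟩
  rintro s ⟨w, -, hw, -⟩
  have := Fintype.card_le_of_injective w hw
  simp only [Fintype.card_fin] at this
  omega

theorem reverse (hP : IsBergePath E t v f) :
    IsBergePath E t (v ∘ Fin.rev) (f ∘ Fin.rev) := by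
  obtain ⟨hv, hf, hfE, hinc⟩ := hP
  refine ⟨hv.comp Fin.rev_injective, hf.comp Fin.rev_injective, fun i => hfE _, fun i => ?_⟩
  simp only [Function.comp_apply, Fin.rev_castSucc, Fin.rev_succ]
  exact (hinc i.rev).symm

theorem rotate (hP : IsBergePath E t v f) (j : Fin t) {e : Finset V} (he : e ∈ E)
    (hef : e ∉ Set.range f) (het : v (Fin.last t) ∈ e) (hej : v j.castSucc ∈ e) :
    ∃ v' f', IsBergePath E t v' f' ∧ v' 0 = v 0 ∧ v' (Fin.last t) = v j.succ ∧
      f j ∉ Set.range f' := by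
  obtain ⟨hv, hf, hfE, hinc⟩ := hP
  refine ⟨v ∘ rotateVertexIndex j, fun p => if p = j then e else f (rotateEdgeIndex j p),
    ⟨hv.comp (rotateVertexIndex_injective j), fun a b hab => ?_, fun p => ?_, fun p => ?_⟩,
    by simp [rotateVertexIndex_zero], by simp [rotateVertexIndex_last], ?_⟩
  · simp only at hab
    split_ifs at hab with ha hb hb
    · rw [ha, hb]
    · exact absurd ⟨_, hab.symm⟩ hef
    · exact absurd ⟨_, hab⟩ hef
    · exact rotateEdgeIndex_injective j (hf hab)
  · simp only
    split_ifs
    exacts [he, hfE _]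
  · simp only [Function.comp_apply]
    split_ifs with hp
    · rw [hp, rotateVertexIndex_castSucc_self, rotateVertexIndex_succ_self]
      exact ⟨hej, het⟩
    · rcases rotateVertexIndex_castSucc_succ hp with ⟨h1, h2⟩ | ⟨h1, h2⟩ <;> rw [h1, h2]
      exacts [hinc _, (hinc _).symm]
  · rintro ⟨p, hp⟩
    simp only at hp
    split_ifs at hp with h
    · exact hef ⟨j, hp.symm⟩
    · exact h (rotateEdgeIndex_injective j ((hf hp).trans (rotateEdgeIndex_self j).symm))

theorem isBergeCycle_cons (hP : IsBergePath E t v f) {c : Finset V} (hc : c ∈ E)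
    (hcf : c ∉ Set.range f) (h0 : v 0 ∈ c) (hlast : v (Fin.last t) ∈ c) :
    IsBergeCycle E (t + 1) v (Fin.cons c f) := by
  obtain ⟨hv, hf, hfE, hinc⟩ := hP
  refine isBergeCycle_succ_iff.2 ⟨hv, Fin.cons_injective_iff.2 ⟨hcf, hf⟩,
    Fin.cases (by simpa using hc) (by simpa using hfE), fun i => ⟨?_, ?_⟩⟩
  · cases i using Fin.cases with
    | zero => simpa using h0
    | succ k => simpa using (hinc k).2
  · cases i using Fin.lastCases with
    | last => simpa [Fin.last_add_one] using hlast
    | cast k => simpa [Fin.coeSucc_eq_succ] using (hinc k).1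

end IsBergePath

namespace IsBergeCycle

variable {E : Finset (Finset V)} {m : ℕ} {u : Fin (m + 1) → V} {g : Fin (m + 1) → Finset V}

theorem isBergePath_cons (hC : IsBergeCycle E (m + 1) u g) {x : V} (hx : x ∉ Set.range u)
    {h : Finset V} (hh : h ∈ E) (hxh : x ∈ h) (a : Fin (m + 1)) (hah : u a ∈ h)
    (hhg : h = g a ∨ h ∉ Set.range g) :
    IsBergePath E (m + 1) (Fin.cons x fun p => u (a + p))
      (Fin.cons h fun p : Fin m => g (a + p.succ)) := by
  obtain ⟨hu, hg, hgE, hinc⟩ := isBergeCycle_succ_iff.1 hC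
  refine ⟨Fin.cons_injective_iff.2 ⟨?_, hu.comp (add_right_injective a)⟩,
    Fin.cons_injective_iff.2
      ⟨?_, (hg.comp (add_right_injective a)).comp (Fin.succ_injective _)⟩,
    Fin.cases (by simpa using hh) (by simpa using fun _ => hgE _), fun i => ?_⟩
  · rintro ⟨p, hp⟩
    exact hx ⟨_, hp⟩
  · rintro ⟨p, hp⟩
    rcases hhg with rfl | hhg
    · exact Fin.succ_ne_zero p (by simpa using hg hp)
    · exact hhg ⟨_, hp⟩
  · cases i using Fin.cases with
    | zero => simpa using ⟨hxh, hah⟩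
    | succ k =>
      have hk := hinc (a + k.castSucc)
      rw [add_assoc, Fin.coeSucc_eq_succ] at hk
      simpa [← Fin.succ_castSucc] using ⟨hk.2, (hinc _).1⟩

theorem succ_le_pathLen [Fintype V] (hC : IsBergeCycle E (m + 1) u g) (hconn : Connected E)
    (hcard : m + 1 < Fintype.card V) : m + 1 ≤ pathLen E := by
  obtain ⟨w, hw⟩ : ∃ w, w ∉ Set.range u := by
    by_contra! hsurj
    have := Fintype.card_le_of_surjective u hsurj
    simp only [Fintype.card_fin] at this
    omega
  obtain ⟨s, q, fq, hQ, hq0, hqs⟩ := hconn w (u 0)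
  obtain ⟨i, hx, ⟨b, hb⟩⟩ := Fin.exists_not_castSucc_and_succ (fun p => q p ∈ Set.range u)
    (by rwa [hq0]) (by rw [hqs]; exact ⟨0, rfl⟩)
  obtain ⟨hxi, hyi⟩ := hQ.2.2.2 i
  by_cases hg : fq i ∈ Set.range g
  · obtain ⟨a, ha⟩ := hg
    exact (hC.isBergePath_cons hx (hQ.2.2.1 i) hxi a (ha ▸ (isBergeCycle_succ_iff.1 hC).2.2.2 a).1
      (Or.inl ha.symm)).le_pathLen_s11
  · exact (hC.isBergePath_cons hx (hQ.2.2.1 i) hxi b (hb ▸ hyi) (Or.inr hg)).le_pathLen_s11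

end IsBergeCycle

theorem IsBergePath.succ_le_pathLen_of_crossing [Fintype V] {E : Finset (Finset V)} {t : ℕ}
    {v : Fin (t + 1) → V} {f : Fin t → Finset V} (hP : IsBergePath E t v f)
    (hconn : Connected E) (hcard : t + 1 < Fintype.card V) (j : Fin t) (h0 : v 0 ∈ f j)
    {e : Finset V} (he : e ∈ E) (hef : e ∉ Set.range f) (het : v (Fin.last t) ∈ e)
    (hej : v j.castSucc ∈ e) : t + 1 ≤ pathLen E := by
  obtain ⟨v', f', hP', h0', hlast', hfj⟩ := hP.rotate j he hef het hej
  have hC := hP'.isBergeCycle_cons (hP.2.2.1 j) hfj (h0' ▸ h0) (hlast' ▸ (hP.2.2.2 j).2)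
  exact hC.succ_le_pathLen hconn hcard

theorem epsi_shift_kappa_disjoint_general {V : Type*} [Fintype V]
    (t n : ℕ) (hcard : Fintype.card V = n) (hn : n > t + 1)
    (E : Finset (Finset V)) (hconn : Connected E)
    (hlen : pathLen E = t)
    (v : Fin (t + 1) → V) (f : Fin t → Finset V) (hP : IsBergePath E t v f) :
    {i : ℤ | i + 1 ∈ epsi f (v 0)} ∩ kappa E v f (v (Fin.last t)) = ∅ ∧
    epsi f (v (Fin.last t)) ∩ kappa E v f (v 0) = ∅ := by
  have hV : t + 1 < Fintype.card V := hcard ▸ hn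
  refine ⟨Set.eq_empty_of_forall_notMem ?_, Set.eq_empty_of_forall_notMem ?_⟩
  · rintro _ ⟨⟨j, hj, h0⟩, ⟨i, rfl, -, -, e, ⟨he, hef, het⟩, hei⟩⟩
    obtain rfl : i = j.castSucc := Fin.ext (by simp only [Fin.val_castSucc]; omega)
    have := hP.succ_le_pathLen_of_crossing hconn hV j h0 he hef het hei
    omega
  · rintro _ ⟨⟨j, rfl, hlast⟩, ⟨i, hi, -, -, e, ⟨he, hef, he0⟩, hei⟩⟩
    obtain rfl : i = j.succ := Fin.ext (by simp only [Fin.val_succ]; omega)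
    have := hP.reverse.succ_le_pathLen_of_crossing hconn hV j.rev (by simpa using hlast) he
      (fun ⟨p, hp⟩ => hef ⟨_, hp⟩) (by simpa using he0)
      (by simpa [Fin.rev_castSucc] using hei)
    omega

/-- **Proposition (1.3) (Statement 11).** Suppose `k ≥ r ≥ 2`, `t ≤ 2k`, `H` is a
connected `r`-graph on `n > t+1` vertices with `ℓ(H) = t`, and `P` is a longest
Berge path with edges `f 0, ..., f (t-1)` and key vertices `v 0, ..., v t`. Then
`(ε^i_0(P) - 1) ∩ κ_t(P) = ∅` and `ε^i_t(P) ∩ κ_0(P) = ∅`. -/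
theorem epsi_shift_kappa_disjoint {V : Type*} [DecidableEq V] [Fintype V]
    (k r t n : ℕ) (hr2 : 2 ≤ r) (hkr : k ≥ r) (ht : t ≤ 2 * k)
    (hcard : Fintype.card V = n) (hn : n > t + 1)
    (E : Finset (Finset V)) (hE : IsRGraph r E) (hconn : Connected E)
    (hlen : pathLen E = t)
    (v : Fin (t + 1) → V) (f : Fin t → Finset V) (hP : IsBergePath E t v f) :
    {i : ℤ | i + 1 ∈ epsi f (v 0)} ∩ kappa E v f (v (Fin.last t)) = ∅ ∧
    epsi f (v (Fin.last t)) ∩ kappa E v f (v 0) = ∅ :=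
  epsi_shift_kappa_disjoint_general t n hcard hn E hconn hlen v f hP

end Berge
end

section
/- Suppose k ≥ r ≥ 2, t ≤ 2k, and H is a connected r-graph on n vertices with ℓ(H) = t and n > t+1. Let P be a longest Berge path in H with edges e_1,...,e_t and key vertices v_0,v_1,...,v_t. Then for every i ∈ κ_0(P) and j ∈ κ_t(P): if i ≤ j then v_{j+1} ∉ e_i and v_{i−1} ∉ e_{j+1}; and if i > j then v_{j−1} ∉ e_i and v_{j+1} ∉ e_{i+1}. -/
/-!
Suppose one of the four memberships held. The outer edges `e ∋ v₀, v_i` and `e' ∋ v_t, v_j` allow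
one Pósa rotation at each end of `P`; the resulting path of length `t` has both ends on the
offending path edge, which the rotations have dropped. That edge closes a Berge cycle of length
`t + 1` (if `e = e'`, then `e` already closes `P`), and since `H` is connected and has a vertex off
the cycle, the cycle opens up into a Berge path of length `t + 1`, contradicting `ℓ(H) = t`.
-/

namespace Berge

open Set

variable {V : Type*}

/-- Berge paths indexed by `ℕ`: only `v` on `[0, t]` and `f` on `[0, t)` matter, so paths can be
rearranged by index arithmetic without carrying bounds proofs. -/
structure IsBergePathNat (E : Finset (Finset V)) (t : ℕ) (v : ℕ → V) (f : ℕ → Finset V) :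
    Prop where
  injOn_vertex : InjOn v (Iic t)
  injOn_edge : InjOn f (Iio t)
  edge_mem : ∀ s < t, f s ∈ E
  left_mem : ∀ s < t, v s ∈ f s
  right_mem : ∀ s < t, v (s + 1) ∈ f s

structure IsOuterEdge (E : Finset (Finset V)) (t : ℕ) (f : ℕ → Finset V) (g : Finset V)
    (x y : V) : Prop where
  mem : g ∈ E
  notMem_path : g ∉ f '' Iio t
  left_mem : x ∈ g
  right_mem : y ∈ g

/-- The path closes up to a Berge cycle of length `t + 1`. -/
def IsClosable (E : Finset (Finset V)) (t : ℕ) (v : ℕ → V) (f : ℕ → Finset V) : Prop :=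
  ∃ g, IsOuterEdge E t f g (v 0) (v t)

def extendFin {α : Type*} {n : ℕ} (u : Fin n → α) (d : α) (s : ℕ) : α :=
  if h : s < n then u ⟨s, h⟩ else d

theorem extendFin_of_lt {α : Type*} {n : ℕ} (u : Fin n → α) (d : α) {s : ℕ} (h : s < n) :
    extendFin u d s = u ⟨s, h⟩ :=
  dif_pos h

@[simp]
theorem extendFin_val {α : Type*} {n : ℕ} (u : Fin n → α) (d : α) (i : Fin n) :
    extendFin u d i = u i :=
  extendFin_of_lt u d i.2

theorem extendFin_image_Iio {α : Type*} {n : ℕ} (u : Fin n → α) (d : α) :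
    extendFin u d '' Iio n = range u := by
  ext x
  constructor
  · rintro ⟨s, hs, rfl⟩
    exact ⟨⟨s, hs⟩, (extendFin_val u d ⟨s, hs⟩).symm⟩
  · rintro ⟨i, rfl⟩
    exact ⟨i, i.2, extendFin_val u d i⟩

theorem apply_ne_of_notMem_image {α : Type*} {f : ℕ → α} {t : ℕ} {g : α} (hg : g ∉ f '' Iio t)
    {s : ℕ} (hs : s < t) : f s ≠ g :=
  fun h => hg ⟨s, hs, h⟩

section

variable {E : Finset (Finset V)} {t : ℕ}

theorem IsBergePath.toNat {v : Fin (t + 1) → V} {f : Fin t → Finset V}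
    (h : IsBergePath E t v f) : IsBergePathNat E t (extendFin v (v 0)) (extendFin f ∅) where
  injOn_vertex a ha b hb hab := by
    rw [extendFin_of_lt _ _ (Nat.lt_succ_of_le ha), extendFin_of_lt _ _ (Nat.lt_succ_of_le hb)]
      at hab
    exact congrArg Fin.val (h.1 hab)
  injOn_edge a ha b hb hab := by
    rw [extendFin_of_lt _ _ ha, extendFin_of_lt _ _ hb] at hab
    exact congrArg Fin.val (h.2.1 hab)
  edge_mem s hs := by
    rw [extendFin_of_lt _ _ hs]
    exact h.2.2.1 _
  left_mem s hs := by
    rw [extendFin_of_lt _ _ hs, extendFin_of_lt _ _ (Nat.lt_succ_of_lt hs)]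
    exact (h.2.2.2 ⟨s, hs⟩).1
  right_mem s hs := by
    rw [extendFin_of_lt _ _ hs, extendFin_of_lt _ _ (Nat.succ_lt_succ hs)]
    exact (h.2.2.2 ⟨s, hs⟩).2

theorem exists_of_mem_kappa {v : Fin (t + 1) → V} {f : Fin t → Finset V} {a : Fin (t + 1)} {i : ℤ}
    (hi : i ∈ kappa E v f (v a)) :
    ∃ I : ℕ, (I : ℤ) = i ∧ I ≤ t ∧ I ≠ a ∧
      ∃ e, IsOuterEdge E t (extendFin f ∅) e (extendFin v (v 0) a) (extendFin v (v 0) I) := by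
  obtain ⟨I, rfl, -, hIa, e, ⟨he, heP, hae⟩, hIe⟩ := hi
  exact ⟨I, rfl, Nat.lt_succ_iff.mp I.2, fun h => hIa (congrArg v (Fin.ext h)), e,
    ⟨he, by rwa [extendFin_image_Iio], by simpa using hae, by simpa using hIe⟩⟩

/-- Pósa rotation at the end: `v 0, …, v m, v t, v (t - 1), …, v (m + 1)`. -/
def rotateEnd (t m : ℕ) (v : ℕ → V) (s : ℕ) : V :=
  if s ≤ m then v s else v (t + m + 1 - s)

def rotateEndEdges (t m : ℕ) (f : ℕ → Finset V) (g : Finset V) (s : ℕ) : Finset V :=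
  if s < m then f s else if s = m then g else f (t + m - s)

/-- Pósa rotation at the start: `v (m - 1), …, v 0, v m, v (m + 1), …, v t`. -/
def rotateStart (m : ℕ) (v : ℕ → V) (s : ℕ) : V :=
  if s < m then v (m - 1 - s) else v s

def rotateStartEdges (m : ℕ) (f : ℕ → Finset V) (g : Finset V) (s : ℕ) : Finset V :=
  if s + 1 < m then f (m - 2 - s) else if s + 1 = m then g else f s

/-- Going round the cycle closed by `g` from `v p`: `v p, …, v t, v 0, …, v (p - 1)`. -/
def cycleShift (t p : ℕ) (v : ℕ → V) (s : ℕ) : V :=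
  if s ≤ t - p then v (s + p) else v (s + p - (t + 1))

def cycleShiftEdges (t p : ℕ) (f : ℕ → Finset V) (g : Finset V) (s : ℕ) : Finset V :=
  if s < t - p then f (s + p) else if s = t - p then g else f (s + p - (t + 1))

theorem rotateEnd_of_le {v : ℕ → V} {m s : ℕ} (hs : s ≤ m) : rotateEnd t m v s = v s :=
  if_pos hs

theorem rotateEnd_of_lt {v : ℕ → V} {m s : ℕ} (hs : m < s) :
    rotateEnd t m v s = v (t + m + 1 - s) :=
  if_neg (by omega)

theorem rotateEndEdges_of_lt {f : ℕ → Finset V} {g : Finset V} {m s : ℕ} (hs : m < s) :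
    rotateEndEdges t m f g s = f (t + m - s) := by
  simp only [rotateEndEdges, if_neg (show ¬s < m by omega), if_neg (show s ≠ m by omega)]

theorem rotateStart_of_lt {v : ℕ → V} {m s : ℕ} (hs : s < m) :
    rotateStart m v s = v (m - 1 - s) :=
  if_pos hs

theorem rotateStart_of_le {v : ℕ → V} {m s : ℕ} (hs : m ≤ s) : rotateStart m v s = v s :=
  if_neg (by omega)

theorem rotateStartEdges_of_le {f : ℕ → Finset V} {g : Finset V} {m s : ℕ} (hs : m ≤ s) :
    rotateStartEdges m f g s = f s := by
  simp only [rotateStartEdges, if_neg (show ¬s + 1 < m by omega), if_neg (show s + 1 ≠ m by omega)]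

theorem cycleShift_zero {v : ℕ → V} {p : ℕ} : cycleShift t p v 0 = v p := by
  simp [cycleShift]

section Edges

variable {f : ℕ → Finset V} {g : Finset V} {m : ℕ}

theorem image_rotateEndEdges_subset :
    rotateEndEdges t m f g '' Iio t ⊆ insert g (f '' {s | s < t ∧ s ≠ m}) := by
  rintro _ ⟨s, hs, rfl⟩
  simp only [mem_Iio] at hs
  unfold rotateEndEdges
  split_ifs
  · exact Or.inr ⟨s, ⟨hs, by omega⟩, rfl⟩
  · exact Or.inl rfl
  · exact Or.inr ⟨t + m - s, ⟨by omega, by omega⟩, rfl⟩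

theorem image_rotateStartEdges_subset (hm : m ≤ t) :
    rotateStartEdges m f g '' Iio t ⊆ insert g (f '' {s | s < t ∧ s + 1 ≠ m}) := by
  rintro _ ⟨s, hs, rfl⟩
  simp only [mem_Iio] at hs
  unfold rotateStartEdges
  split_ifs
  · exact Or.inr ⟨m - 2 - s, ⟨by omega, by omega⟩, rfl⟩
  · exact Or.inl rfl
  · exact Or.inr ⟨s, ⟨hs, by omega⟩, rfl⟩

theorem image_cycleShiftEdges_subset {p : ℕ} (hp : p ≤ t) :
    cycleShiftEdges t p f g '' Iio t ⊆ insert g (f '' {s | s < t ∧ s + 1 ≠ p}) := by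
  rintro _ ⟨s, hs, rfl⟩
  simp only [mem_Iio] at hs
  unfold cycleShiftEdges
  split_ifs
  · exact Or.inr ⟨s + p, ⟨by omega, by omega⟩, rfl⟩
  · exact Or.inl rfl
  · exact Or.inr ⟨s + p - (t + 1), ⟨by omega, by omega⟩, rfl⟩

theorem notMem_image_rotateEndEdges {x : Finset V} (hxg : x ≠ g) (hxf : x ∉ f '' Iio t) :
    x ∉ rotateEndEdges t m f g '' Iio t := fun hx =>
  (image_rotateEndEdges_subset hx).elim hxg fun ⟨s, hs, hfs⟩ => hxf ⟨s, hs.1, hfs⟩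

theorem notMem_image_rotateStartEdges (hm : m ≤ t) {x : Finset V} (hxg : x ≠ g)
    (hxf : x ∉ f '' Iio t) : x ∉ rotateStartEdges m f g '' Iio t := fun hx =>
  (image_rotateStartEdges_subset hm hx).elim hxg fun ⟨s, hs, hfs⟩ => hxf ⟨s, hs.1, hfs⟩

end Edges

namespace IsBergePathNat

variable {v : ℕ → V} {f : ℕ → Finset V} {g : Finset V} {m : ℕ}

theorem toBergePath (h : IsBergePathNat E t v f) :
    IsBergePath E t (fun s => v s) (fun s => f s) :=
  ⟨fun a b hab => Fin.ext (h.injOn_vertex (Nat.lt_succ_iff.mp a.2) (Nat.lt_succ_iff.mp b.2) hab),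
    fun a b hab => Fin.ext (h.injOn_edge a.2 b.2 hab), fun s => h.edge_mem s s.2,
    fun s => ⟨h.left_mem s s.2, h.right_mem s s.2⟩⟩

theorem le_pathLen [Fintype V] (h : IsBergePathNat E t v f) : t ≤ pathLen E := by
  refine le_csSup ⟨Fintype.card V, ?_⟩ ⟨_, _, h.toBergePath⟩
  rintro s ⟨w, _, hw⟩
  have := Fintype.card_le_of_injective w hw.1
  simp only [Fintype.card_fin] at this
  omega

theorem edge_notMem_image (h : IsBergePathNat E t v f) {S : Set ℕ} (hS : S ⊆ Iio t) {s : ℕ}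
    (hs : s < t) (hsS : s ∉ S) : f s ∉ f '' S := fun hmem =>
  hsS ((h.injOn_edge.mem_image_iff hS hs).mp hmem)

theorem left_mem_of_eq (h : IsBergePathNat E t v f) {s a : ℕ} (hs : s < t) (ha : a = s) :
    v a ∈ f s :=
  ha ▸ h.left_mem s hs

theorem right_mem_of_eq (h : IsBergePathNat E t v f) {s a : ℕ} (hs : s < t) (ha : a = s + 1) :
    v a ∈ f s :=
  ha ▸ h.right_mem s hs

theorem rotateEnd (h : IsBergePathNat E t v f) (hg : IsOuterEdge E t f g (v t) (v m)) :
    IsBergePathNat E t (rotateEnd t m v) (rotateEndEdges t m f g) where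
  injOn_vertex a ha b hb hab := by
    simp only [mem_Iic] at ha hb
    simp only [Berge.rotateEnd] at hab
    split_ifs at hab <;> have := h.injOn_vertex (by simp; omega) (by simp; omega) hab <;> omega
  injOn_edge a ha b hb hab := by
    simp only [mem_Iio] at ha hb
    simp only [rotateEndEdges] at hab
    split_ifs at hab <;>
      first
      | omega
      | exact absurd hab (apply_ne_of_notMem_image hg.notMem_path (by omega))
      | exact absurd hab.symm (apply_ne_of_notMem_image hg.notMem_path (by omega))
      | (have := h.injOn_edge (by simp; omega) (by simp; omega) hab; omega)
  edge_mem s hs := by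
    simp only [rotateEndEdges]
    split_ifs <;> first | exact hg.mem | exact h.edge_mem _ (by omega)
  left_mem s hs := by
    simp only [Berge.rotateEnd, rotateEndEdges]
    split_ifs <;>
      first
      | omega
      | (rw [show s = m by omega]; exact hg.right_mem)
      | exact h.left_mem_of_eq (by omega) (by omega)
      | exact h.right_mem_of_eq (by omega) (by omega)
  right_mem s hs := by
    simp only [Berge.rotateEnd, rotateEndEdges]
    split_ifs <;>
      first
      | omega
      | (rw [show t + m + 1 - (s + 1) = t by omega]; exact hg.left_mem)
      | exact h.left_mem_of_eq (by omega) (by omega)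
      | exact h.right_mem_of_eq (by omega) (by omega)

theorem rotateStart (h : IsBergePathNat E t v f) (hmt : m ≤ t)
    (hg : IsOuterEdge E t f g (v 0) (v m)) :
    IsBergePathNat E t (rotateStart m v) (rotateStartEdges m f g) where
  injOn_vertex a ha b hb hab := by
    simp only [mem_Iic] at ha hb
    simp only [Berge.rotateStart] at hab
    split_ifs at hab <;> have := h.injOn_vertex (by simp; omega) (by simp; omega) hab <;> omega
  injOn_edge a ha b hb hab := by
    simp only [mem_Iio] at ha hb
    simp only [rotateStartEdges] at hab
    split_ifs at hab <;>
      first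
      | omega
      | exact absurd hab (apply_ne_of_notMem_image hg.notMem_path (by omega))
      | exact absurd hab.symm (apply_ne_of_notMem_image hg.notMem_path (by omega))
      | (have := h.injOn_edge (by simp; omega) (by simp; omega) hab; omega)
  edge_mem s hs := by
    simp only [rotateStartEdges]
    split_ifs <;> first | exact hg.mem | exact h.edge_mem _ (by omega)
  left_mem s hs := by
    simp only [Berge.rotateStart, rotateStartEdges]
    split_ifs <;>
      first
      | omega
      | (rw [show m - 1 - s = 0 by omega]; exact hg.left_mem)
      | exact h.left_mem_of_eq (by omega) (by omega)
      | exact h.right_mem_of_eq (by omega) (by omega)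
  right_mem s hs := by
    simp only [Berge.rotateStart, rotateStartEdges]
    split_ifs <;>
      first
      | omega
      | (rw [show s + 1 = m by omega]; exact hg.right_mem)
      | exact h.left_mem_of_eq (by omega) (by omega)
      | exact h.right_mem_of_eq (by omega) (by omega)

theorem cycleShift (h : IsBergePathNat E t v f) {p : ℕ} (hp : p ≤ t)
    (hg : IsOuterEdge E t f g (v 0) (v t)) :
    IsBergePathNat E t (cycleShift t p v) (cycleShiftEdges t p f g) where
  injOn_vertex a ha b hb hab := by
    simp only [mem_Iic] at ha hb
    simp only [Berge.cycleShift] at hab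
    split_ifs at hab <;> have := h.injOn_vertex (by simp; omega) (by simp; omega) hab <;> omega
  injOn_edge a ha b hb hab := by
    simp only [mem_Iio] at ha hb
    simp only [cycleShiftEdges] at hab
    split_ifs at hab <;>
      first
      | omega
      | exact absurd hab (apply_ne_of_notMem_image hg.notMem_path (by omega))
      | exact absurd hab.symm (apply_ne_of_notMem_image hg.notMem_path (by omega))
      | (have := h.injOn_edge (by simp; omega) (by simp; omega) hab; omega)
  edge_mem s hs := by
    simp only [cycleShiftEdges]
    split_ifs <;> first | exact hg.mem | exact h.edge_mem _ (by omega)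
  left_mem s hs := by
    simp only [Berge.cycleShift, cycleShiftEdges]
    split_ifs <;>
      first
      | omega
      | exact h.left_mem_of_eq (by omega) (by omega)
      | (rw [show s + p = t by omega]; exact hg.right_mem)
  right_mem s hs := by
    simp only [Berge.cycleShift, cycleShiftEdges]
    split_ifs <;>
      first
      | omega
      | exact h.right_mem_of_eq (by omega) (by omega)
      | (rw [show s + 1 + p - (t + 1) = 0 by omega]; exact hg.left_mem)

theorem image_cycleShift_subset {p : ℕ} (hp : p ≤ t) :
    Berge.cycleShift t p v '' Iic t ⊆ v '' Iic t := by
  rintro _ ⟨s, hs, rfl⟩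
  simp only [mem_Iic] at hs
  unfold Berge.cycleShift
  split_ifs
  · exact mem_image_of_mem v (show s + p ≤ t by omega)
  · exact mem_image_of_mem v (show s + p - (t + 1) ≤ t by omega)

theorem cons (h : IsBergePathNat E t v f) {y : V} (hy : y ∉ v '' Iic t)
    (hg : IsOuterEdge E t f g y (v 0)) :
    IsBergePathNat E (t + 1) (fun s => if s = 0 then y else v (s - 1))
      (fun s => if s = 0 then g else f (s - 1)) where
  injOn_vertex a ha b hb hab := by
    simp only [mem_Iic] at ha hb
    dsimp only at hab
    split_ifs at hab
    · omega
    · exact absurd ⟨b - 1, by simp; omega, hab.symm⟩ hy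
    · exact absurd ⟨a - 1, by simp; omega, hab⟩ hy
    · have := h.injOn_vertex (by simp; omega) (by simp; omega) hab
      omega
  injOn_edge a ha b hb hab := by
    simp only [mem_Iio] at ha hb
    dsimp only at hab
    split_ifs at hab
    · omega
    · exact absurd hab.symm (apply_ne_of_notMem_image hg.notMem_path (by omega))
    · exact absurd hab (apply_ne_of_notMem_image hg.notMem_path (by omega))
    · have := h.injOn_edge (by simp; omega) (by simp; omega) hab
      omega
  edge_mem s hs := by
    split_ifs
    · exact hg.mem
    · exact h.edge_mem _ (by omega)
  left_mem s hs := by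
    split_ifs
    · exact hg.left_mem
    · exact h.left_mem _ (by omega)
  right_mem s hs := by
    rw [if_neg s.succ_ne_zero, Nat.add_sub_cancel]
    split_ifs with hs0
    · exact hs0 ▸ hg.right_mem
    · exact h.right_mem_of_eq (by omega) (by omega)

theorem exists_rotation_start_mem (h : IsBergePathNat E t v f)
    (hg : IsOuterEdge E t f g (v 0) (v t)) {c : Finset V} {p : ℕ} (hp : p ≤ t) (hvp : v p ∈ c) :
    ∃ w F, IsBergePathNat E t w F ∧ w '' Iic t ⊆ v '' Iic t ∧ w 0 ∈ c ∧ c ∉ F '' Iio t := by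
  by_cases hcg : c = g
  · exact ⟨v, f, h, subset_rfl, hcg ▸ hg.left_mem, hcg ▸ hg.notMem_path⟩
  by_cases hcf : c ∈ f '' Iio t
  · obtain ⟨s, hs, rfl⟩ := hcf
    refine ⟨_, _, h.cycleShift hs hg, image_cycleShift_subset hs, ?_, fun hmem => ?_⟩
    · rw [cycleShift_zero]
      exact h.right_mem s hs
    · rcases image_cycleShiftEdges_subset hs hmem with hfg | hmem'
      · exact hg.notMem_path ⟨s, hs, hfg⟩
      · exact h.edge_notMem_image (fun x hx => hx.1) hs (fun hx => hx.2 rfl) hmem'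
  · refine ⟨_, _, h.cycleShift hp hg, image_cycleShift_subset hp, cycleShift_zero ▸ hvp,
      fun hmem => ?_⟩
    rcases image_cycleShiftEdges_subset hp hmem with hcg' | ⟨s, hs, hfs⟩
    · exact hcg hcg'
    · exact hcf ⟨s, hs.1, hfs⟩

end IsBergePathNat

theorem Connected.exists_crossing_edge (hconn : Connected E) {S : Set V} {x y : V} (hx : x ∈ S)
    (hy : y ∉ S) : ∃ c ∈ E, ∃ z ∉ S, z ∈ c ∧ ∃ x' ∈ S, x' ∈ c := by
  obtain ⟨T, w, q, hQ, hw0, hwT⟩ := hconn y x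
  by_contra! hno
  have hout : ∀ i (hi : i < T + 1), w ⟨i, hi⟩ ∉ S := by
    intro i
    induction i with
    | zero => intro _; simpa [← hw0] using hy
    | succ i ih =>
      intro hi
      have hq := hQ.2.2.2 ⟨i, by omega⟩
      exact fun hmem => hno _ (hQ.2.2.1 _) _ (ih (by omega)) hq.1 _ hmem hq.2
  exact hout T (by omega) (hwT ▸ hx)

theorem IsBergePathNat.not_isClosable [Fintype V] {v : ℕ → V} {f : ℕ → Finset V}
    (h : IsBergePathNat E t v f) (hconn : Connected E) (hlen : pathLen E = t)
    (hcard : t + 1 < Fintype.card V) : ¬IsClosable E t v f := by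
  rintro ⟨g, hg⟩
  obtain ⟨y, hy⟩ : ∃ y, y ∉ v '' Iic t := by
    by_contra! hall
    have hsurj : Function.Surjective fun i : Fin (t + 1) => v i := fun y => by
      obtain ⟨s, hs, rfl⟩ := hall y
      exact ⟨⟨s, Nat.lt_succ_of_le hs⟩, rfl⟩
    have := Fintype.card_le_of_surjective _ hsurj
    simp only [Fintype.card_fin] at this
    omega
  obtain ⟨c, hc, z, hz, hzc, _, ⟨p, hp, rfl⟩, hpc⟩ :=
    hconn.exists_crossing_edge (mem_image_of_mem v (show 0 ∈ Iic t from Nat.zero_le t)) hy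
  obtain ⟨w, F, hw, hwv, hw0, hcF⟩ := h.exists_rotation_start_mem hg hp hpc
  have := (hw.cons (fun hzw => hz (hwv hzw)) ⟨hc, hcF, hzc, hw0⟩).le_pathLen
  omega

end

section Rerouting

variable {E : Finset (Finset V)} {t : ℕ} {v : ℕ → V} {f : ℕ → Finset V} {e e' : Finset V}
  {I J : ℕ}

theorem IsBergePathNat.pred_edge_notMem_image_rotate (hP : IsBergePathNat E t v f) (hI : 1 ≤ I)
    (hIt : I ≤ t) (heP : e ∉ f '' Iio t) (he'P : e' ∉ f '' Iio t) (m : ℕ) :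
    f (I - 1) ∉ rotateEndEdges t m (rotateStartEdges I f e) e' '' Iio t :=
  notMem_image_rotateEndEdges (apply_ne_of_notMem_image he'P (by omega)) fun hmem =>
    (image_rotateStartEdges_subset hIt hmem).elim (apply_ne_of_notMem_image heP (by omega))
      (hP.edge_notMem_image (fun _ hx => hx.1) (by omega) fun hx => hx.2 (by omega))

theorem vertex_notMem_edge_of_le (hmax : ∀ w F, IsBergePathNat E t w F → ¬IsClosable E t w F)
    (hP : IsBergePathNat E t v f) (he : IsOuterEdge E t f e (v 0) (v I))
    (he' : IsOuterEdge E t f e' (v t) (v J)) (hee : e ≠ e') (hI : 1 ≤ I) (hIJ : I ≤ J)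
    (hJ : J < t) : v (J + 1) ∉ f (I - 1) ∧ v (I - 1) ∉ f J := by
  have hQ := hP.rotateStart (show I ≤ t by omega) he
  have hR := hQ.rotateEnd (m := J)
    ⟨he'.mem, notMem_image_rotateStartEdges (show I ≤ t by omega) hee.symm he'.notMem_path,
      by rw [rotateStart_of_le (show I ≤ t by omega)]; exact he'.left_mem,
      by rw [rotateStart_of_le hIJ]; exact he'.right_mem⟩
  have hR0 : rotateEnd t J (rotateStart I v) 0 = v (I - 1) := by
    rw [rotateEnd_of_le (Nat.zero_le J), rotateStart_of_lt (show 0 < I by omega), Nat.sub_zero]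
  have hRt : rotateEnd t J (rotateStart I v) t = v (J + 1) := by
    rw [rotateEnd_of_lt hJ, rotateStart_of_le (show I ≤ t + J + 1 - t by omega)]
    congr 1
    omega
  constructor
  · intro hmem
    refine hmax _ _ hR ⟨f (I - 1), hP.edge_mem _ (by omega),
      hP.pred_edge_notMem_image_rotate hI (by omega) he.notMem_path he'.notMem_path J, ?_, ?_⟩
    · rw [hR0]
      exact hP.left_mem _ (by omega)
    · rwa [hRt]
  · intro hmem
    refine hmax _ _ hR ⟨f J, hP.edge_mem J hJ, fun hfR => ?_, by rwa [hR0], ?_⟩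
    · rcases image_rotateEndEdges_subset hfR with hfe' | hfQ
      · exact he'.notMem_path ⟨J, hJ, hfe'⟩
      · obtain ⟨s, ⟨hs, hsJ⟩, hfs⟩ := hfQ
        exact hsJ (hQ.injOn_edge hs hJ (hfs.trans (rotateStartEdges_of_le hIJ).symm))
    · rw [hRt]
      exact hP.right_mem J hJ

theorem pred_vertex_notMem_edge_of_lt
    (hmax : ∀ w F, IsBergePathNat E t w F → ¬IsClosable E t w F)
    (hP : IsBergePathNat E t v f) (he : IsOuterEdge E t f e (v 0) (v I))
    (he' : IsOuterEdge E t f e' (v t) (v J)) (hee : e ≠ e') (hJ : 1 ≤ J) (hJI : J < I)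
    (hI : I ≤ t) : v (J - 1) ∉ f (I - 1) := by
  intro hmem
  have hQ := hP.rotateStart hI he
  have hQJ : rotateStart I v (I - 1 - J) = v J := by
    rw [rotateStart_of_lt (show I - 1 - J < I by omega)]
    congr 1
    omega
  have hR := hQ.rotateEnd (m := I - 1 - J)
    ⟨he'.mem, notMem_image_rotateStartEdges hI hee.symm he'.notMem_path,
      by rw [rotateStart_of_le hI]; exact he'.left_mem, by rw [hQJ]; exact he'.right_mem⟩
  have hR0 : rotateEnd t (I - 1 - J) (rotateStart I v) 0 = v (I - 1) := by
    rw [rotateEnd_of_le (Nat.zero_le _), rotateStart_of_lt (show 0 < I by omega), Nat.sub_zero]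
  have hRt : rotateEnd t (I - 1 - J) (rotateStart I v) t = v (J - 1) := by
    rw [rotateEnd_of_lt (show I - 1 - J < t by omega),
      rotateStart_of_lt (show t + (I - 1 - J) + 1 - t < I by omega)]
    congr 1
    omega
  refine hmax _ _ hR ⟨f (I - 1), hP.edge_mem _ (by omega),
    hP.pred_edge_notMem_image_rotate (by omega) hI he.notMem_path he'.notMem_path _, ?_, ?_⟩
  · rw [hR0]
    exact hP.left_mem _ (by omega)
  · rwa [hRt]

theorem succ_vertex_notMem_edge_of_lt
    (hmax : ∀ w F, IsBergePathNat E t w F → ¬IsClosable E t w F)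
    (hP : IsBergePathNat E t v f) (he : IsOuterEdge E t f e (v 0) (v I))
    (he' : IsOuterEdge E t f e' (v t) (v J)) (hee : e ≠ e') (hJI : J < I) (hI : I < t) :
    v (J + 1) ∉ f I := by
  intro hmem
  have hQ := hP.rotateEnd he'
  obtain ⟨m, hm⟩ : ∃ m, m = t + J + 1 - I := ⟨_, rfl⟩
  have hQm : rotateEnd t J v m = v I := by
    rw [rotateEnd_of_lt (show J < m by omega)]
    congr 1
    omega
  have hR := hQ.rotateStart (m := m) (by omega)
    ⟨he.mem, notMem_image_rotateEndEdges hee he.notMem_path,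
      by rw [rotateEnd_of_le (Nat.zero_le J)]; exact he.left_mem, by rw [hQm]; exact he.right_mem⟩
  have hR0 : rotateStart m (rotateEnd t J v) 0 = v (I + 1) := by
    rw [rotateStart_of_lt (show 0 < m by omega), rotateEnd_of_lt (show J < m - 1 - 0 by omega)]
    congr 1
    omega
  have hRt : rotateStart m (rotateEnd t J v) t = v (J + 1) := by
    rw [rotateStart_of_le (show m ≤ t by omega), rotateEnd_of_lt (show J < t by omega)]
    congr 1
    omega
  have hQI : rotateEndEdges t J f e' (m - 1) = f I := by
    rw [rotateEndEdges_of_lt (show J < m - 1 by omega)]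
    congr 1
    omega
  refine hmax _ _ hR ⟨f I, hP.edge_mem I hI, fun hfR => ?_, ?_, by rwa [hRt]⟩
  · rcases image_rotateStartEdges_subset (show m ≤ t by omega) hfR with hfe | hfQ
    · exact he.notMem_path ⟨I, hI, hfe⟩
    · obtain ⟨s, ⟨hs, hsm⟩, hfs⟩ := hfQ
      exact hsm (by
        have := hQ.injOn_edge hs (show m - 1 < t by omega) (hfs.trans hQI.symm)
        omega)
  · rw [hR0]
    exact hP.right_mem I hI

end Rerouting

theorem key_vertex_not_mem_path_edge_general {V : Type*} [Fintype V]
    (t n : ℕ)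
    (hcard : Fintype.card V = n) (hn : n > t + 1)
    (E : Finset (Finset V)) (hconn : Connected E)
    (hlen : pathLen E = t)
    (v : Fin (t + 1) → V) (f : Fin t → Finset V) (hP : IsBergePath E t v f) :
    ∀ i j : ℤ, i ∈ kappa E v f (v 0) → j ∈ kappa E v f (v (Fin.last t)) →
      (i ≤ j →
        (∀ (a : Fin (t + 1)) (b : Fin t),
          ((a : ℕ) : ℤ) = j + 1 → ((b : ℕ) : ℤ) + 1 = i → v a ∉ f b) ∧
        (∀ (a : Fin (t + 1)) (b : Fin t),
          ((a : ℕ) : ℤ) = i - 1 → ((b : ℕ) : ℤ) + 1 = j + 1 → v a ∉ f b)) ∧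
      (i > j →
        (∀ (a : Fin (t + 1)) (b : Fin t),
          ((a : ℕ) : ℤ) = j - 1 → ((b : ℕ) : ℤ) + 1 = i → v a ∉ f b) ∧
        (∀ (a : Fin (t + 1)) (b : Fin t),
          ((a : ℕ) : ℤ) = j + 1 → ((b : ℕ) : ℤ) + 1 = i + 1 → v a ∉ f b)) := by
  intro i j hi hj
  obtain ⟨I, rfl, -, hI, e, he⟩ := exists_of_mem_kappa hi
  obtain ⟨J, rfl, hJt, hJ, e', he'⟩ := exists_of_mem_kappa hj
  rw [Fin.val_zero] at hI
  rw [Fin.val_last] at hJ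
  have hmax : ∀ w F, IsBergePathNat E t w F → ¬IsClosable E t w F :=
    fun w F hw => hw.not_isClosable hconn hlen (by omega)
  have hee : e ≠ e' := by
    rintro rfl
    exact hmax _ _ hP.toNat ⟨e, he.mem, he.notMem_path, he.left_mem, he'.left_mem⟩
  have hval : ∀ (a : Fin (t + 1)) (b : Fin t) {a' b' : ℕ}, (a : ℕ) = a' → (b : ℕ) = b' →
      extendFin v (v 0) a' ∉ extendFin f ∅ b' → v a ∉ f b := by
    rintro a b _ _ rfl rfl
    simp
  have hAB := vertex_notMem_edge_of_le hmax hP.toNat he he' hee (by omega)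
  refine ⟨fun hij => ⟨fun a b ha hb => ?_, fun a b ha hb => ?_⟩,
    fun hij => ⟨fun a b ha hb => ?_, fun a b ha hb => ?_⟩⟩
  · exact hval a b (by omega) (by omega) (hAB (by omega) (by omega)).1
  · exact hval a b (by omega) (by omega) (hAB (by omega) (by omega)).2
  · exact hval a b (by omega) (by omega)
      (pred_vertex_notMem_edge_of_lt hmax hP.toNat he he' hee (by omega) (by omega) (by omega))
  · exact hval a b (by omega) (by omega)
      (succ_vertex_notMem_edge_of_lt hmax hP.toNat he he' hee (by omega) (by omega))

/-- **Proposition (1.5) (Statement 13).** Suppose `k ≥ r ≥ 2`, `t ≤ 2k`, `H` is a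
connected `r`-graph on `n > t+1` vertices with `ℓ(H) = t`, and `P` is a longest
Berge path with edges `e_i = f (i-1)` (1-based) and key vertices `v 0, ..., v t`.
Then for `i ∈ κ_0(P)` and `j ∈ κ_t(P)`: if `i ≤ j` then `v_{j+1} ∉ e_i` and
`v_{i-1} ∉ e_{j+1}`; if `i > j` then `v_{j-1} ∉ e_i` and `v_{j+1} ∉ e_{i+1}`. -/
theorem key_vertex_not_mem_path_edge {V : Type*} [DecidableEq V] [Fintype V]
    (k r t n : ℕ) (hr2 : 2 ≤ r) (hkr : k ≥ r) (ht : t ≤ 2 * k)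
    (hcard : Fintype.card V = n) (hn : n > t + 1)
    (E : Finset (Finset V)) (hE : IsRGraph r E) (hconn : Connected E)
    (hlen : pathLen E = t)
    (v : Fin (t + 1) → V) (f : Fin t → Finset V) (hP : IsBergePath E t v f) :
    ∀ i j : ℤ, i ∈ kappa E v f (v 0) → j ∈ kappa E v f (v (Fin.last t)) →
      (i ≤ j →
        (∀ (a : Fin (t + 1)) (b : Fin t),
          ((a : ℕ) : ℤ) = j + 1 → ((b : ℕ) : ℤ) + 1 = i → v a ∉ f b) ∧
        (∀ (a : Fin (t + 1)) (b : Fin t),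
          ((a : ℕ) : ℤ) = i - 1 → ((b : ℕ) : ℤ) + 1 = j + 1 → v a ∉ f b)) ∧
      (i > j →
        (∀ (a : Fin (t + 1)) (b : Fin t),
          ((a : ℕ) : ℤ) = j - 1 → ((b : ℕ) : ℤ) + 1 = i → v a ∉ f b) ∧
        (∀ (a : Fin (t + 1)) (b : Fin t),
          ((a : ℕ) : ℤ) = j + 1 → ((b : ℕ) : ℤ) + 1 = i + 1 → v a ∉ f b)) :=
  key_vertex_not_mem_path_edge_general t n hcard hn E hconn hlen v f hP

end Berge
end
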